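/- Let G be a d-regular graph with chromatic index d+1, and let c : E(G) → {1,...,d+1} be a proper edge coloring. For each vertex v let a_v be the unique color in {1,...,d+1} not appearing on an edge incident to v. If for every path v₁,v₂,v₃ of length 2 in G the difference a_{v₁} − a_{v₃} is either 0 or odd, then c is an additive edge coloring of G. -/

import Mathlib

open scoped Classical
open Finset

namespace AddEdge

variable {V : Type*} [Fintype V] [DecidableEq V]

/-- `N'(e)`-sum: the sum of the colors of the edges of `G` sharing an endpoint
with `e`, excluding `e` itself. -/
noncomputable def nbrSum (G : SimpleGraph V) (c : Sym2 V → ℕ) (e : Sym2 V) : ℕ :=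
  ∑ f ∈ univ.filter (fun f => f ∈ G.edgeSet ∧ f ≠ e ∧ ∃ v, v ∈ e ∧ v ∈ f), c f

/-- `c` is a proper edge coloring of `G`: distinct incident edges get distinct colors. -/
def IsProperEdgeColoring (G : SimpleGraph V) (c : Sym2 V → ℕ) : Prop :=
  ∀ e ∈ G.edgeSet, ∀ f ∈ G.edgeSet, e ≠ f → (∃ v, v ∈ e ∧ v ∈ f) → c e ≠ c f

/-- `c` is an additive edge coloring of `G`: distinct incident edges have distinct
sums of colors over their incident-edge neighborhoods. -/
def IsAdditiveEdgeColoring (G : SimpleGraph V) (c : Sym2 V → ℕ) : Prop :=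
  ∀ e ∈ G.edgeSet, ∀ f ∈ G.edgeSet, e ≠ f → (∃ v, v ∈ e ∧ v ∈ f) →
    nbrSum G c e ≠ nbrSum G c f

/-- The chromatic index: the least `k` such that `G` has a proper edge coloring
with colors from `{1, …, k}`. -/
noncomputable def chromIndex (G : SimpleGraph V) : ℕ :=
  sInf {k | ∃ c : Sym2 V → ℕ, (∀ e ∈ G.edgeSet, c e ∈ Finset.Icc 1 k) ∧
    IsProperEdgeColoring G c}

/-- The proper additive chromatic index `η'_p(G)`: the least `k` such that `G` has an
edge coloring with colors from `{1, …, k}` that is both proper and additive. -/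
noncomputable def properAddIndex (G : SimpleGraph V) : ℕ :=
  sInf {k | ∃ c : Sym2 V → ℕ, (∀ e ∈ G.edgeSet, c e ∈ Finset.Icc 1 k) ∧
    IsProperEdgeColoring G c ∧ IsAdditiveEdgeColoring G c}

/-!
For an edge `uv`, the neighbourhood `N'(uv)` consists of the edges at `u` and at `v` other
than `uv`, so `nbrSum (uv) + 2 c(uv)` is the sum of the colors at `u` plus those at `v`.
In a `d`-regular graph properly colored with `1, …, d + 1`, the colors at `x` are all colors
but `a x`, so this is `2 S - a u - a v` with `S = 1 + ⋯ + (d + 1)`. Hence for edges `vu`, `vw`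
with equal sums, `a u - a w = 2 (c(vw) - c(vu))`: this is even, and nonzero because the
coloring is proper, contradicting the hypothesis on `a`.
-/

theorem sum_add_eq_sum_of_mapsTo_erase {α M : Type*} [AddCommMonoid M] [DecidableEq M]
    {s : Finset α} {t : Finset M} {c : α → M} {a : M} (hinj : Set.InjOn c s)
    (hmaps : ∀ x ∈ s, c x ∈ t.erase a) (ha : a ∈ t) (hcard : #s + 1 = #t) :
    ∑ x ∈ s, c x + a = ∑ i ∈ t, i := by
  have himage : s.image c = t.erase a := by
    refine eq_of_subset_of_card_le (image_subset_iff.2 hmaps) ?_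
    rw [card_erase_of_mem ha, card_image_of_injOn hinj]
    omega
  rw [← sum_erase_add _ _ ha, ← himage, sum_image hinj]

omit [Fintype V] in
theorem IsProperEdgeColoring.injOn_incidenceSet {G : SimpleGraph V} {c : Sym2 V → ℕ}
    (hc : IsProperEdgeColoring G c) (v : V) : Set.InjOn c (G.incidenceSet v) := by
  intro e he f hf hef
  by_contra hne
  exact hc e he.1 f hf.1 hne ⟨v, he.2, hf.2⟩ hef

theorem sum_incidenceFinset_add_missing {G : SimpleGraph V} {c : Sym2 V → ℕ} {v : V}
    {d a : ℕ} (hdeg : G.degree v = d) (hinj : Set.InjOn c (G.incidenceSet v))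
    (hcol : ∀ e ∈ G.incidenceSet v, c e ∈ Icc 1 (d + 1)) (ha : a ∈ Icc 1 (d + 1))
    (hmiss : ∀ e ∈ G.incidenceSet v, c e ≠ a) :
    ∑ e ∈ G.incidenceFinset v, c e + a = ∑ i ∈ Icc 1 (d + 1), i := by
  refine sum_add_eq_sum_of_mapsTo_erase (by simpa using hinj) (fun e he => ?_) ha ?_
  · rw [SimpleGraph.mem_incidenceFinset] at he
    exact mem_erase.2 ⟨hmiss e he, hcol e he⟩
  · rw [SimpleGraph.card_incidenceFinset_eq_degree, hdeg, Nat.card_Icc]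
    omega

theorem nbrSum_eq_sum_erase (G : SimpleGraph V) (c : Sym2 V → ℕ) (u v : V) :
    nbrSum G c s(u, v) =
      ∑ f ∈ (G.incidenceFinset u ∪ G.incidenceFinset v).erase s(u, v), c f := by
  refine sum_congr (ext fun f => ?_) fun _ _ => rfl
  simp only [mem_filter, mem_univ, true_and, mem_erase, mem_union,
    SimpleGraph.mem_incidenceFinset, SimpleGraph.incidenceSet, Set.mem_sep_iff,
    Sym2.mem_iff, exists_eq_or_imp, exists_eq_left]
  tauto

theorem nbrSum_add_two_mul {G : SimpleGraph V} (c : Sym2 V → ℕ) {u v : V} (huv : G.Adj u v) :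
    nbrSum G c s(u, v) + 2 * c s(u, v) =
      ∑ f ∈ G.incidenceFinset u, c f + ∑ f ∈ G.incidenceFinset v, c f := by
  have hinter : G.incidenceFinset u ∩ G.incidenceFinset v = {s(u, v)} := by
    rw [← coe_inj, coe_inter, coe_singleton, SimpleGraph.coe_incidenceFinset,
      SimpleGraph.coe_incidenceFinset, G.incidenceSet_inter_incidenceSet_of_adj huv]
  have hmem : s(u, v) ∈ G.incidenceFinset u ∪ G.incidenceFinset v :=
    mem_union_left _ ((G.mem_incidenceFinset _ _).2 ⟨huv, Sym2.mem_mk_left _ _⟩)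
  rw [← sum_union_inter, hinter, sum_singleton, nbrSum_eq_sum_erase, two_mul, ← add_assoc,
    sum_erase_add _ _ hmem]

theorem nbrSum_add_missing {G : SimpleGraph V} {d : ℕ} (hreg : G.IsRegularOfDegree d)
    {c : Sym2 V → ℕ} (hcol : ∀ e ∈ G.edgeSet, c e ∈ Icc 1 (d + 1))
    (hc : IsProperEdgeColoring G c) {a : V → ℕ} (ha : ∀ v, a v ∈ Icc 1 (d + 1))
    (hmiss : ∀ v, ∀ e ∈ G.edgeSet, v ∈ e → c e ≠ a v) {u v : V} (huv : G.Adj u v) :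
    nbrSum G c s(u, v) + 2 * c s(u, v) + a u + a v = 2 * ∑ i ∈ Icc 1 (d + 1), i := by
  have hsum : ∀ x, ∑ e ∈ G.incidenceFinset x, c e + a x = ∑ i ∈ Icc 1 (d + 1), i :=
    fun x => sum_incidenceFinset_add_missing (hreg x) (hc.injOn_incidenceSet x)
      (fun e he => hcol e he.1) (ha x) (fun e he => hmiss x e he.1 he.2)
  have := nbrSum_add_two_mul c huv
  have := hsum u
  have := hsum v
  omega

theorem additive_of_missing_odd_general (G : SimpleGraph V) (d : ℕ)
    (hreg : G.IsRegularOfDegree d)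
    (c : Sym2 V → ℕ) (hcol : ∀ e ∈ G.edgeSet, c e ∈ Finset.Icc 1 (d + 1))
    (hc : IsProperEdgeColoring G c)
    (a : V → ℕ) (ha : ∀ v, a v ∈ Finset.Icc 1 (d + 1))
    (hmiss : ∀ v, ∀ e ∈ G.edgeSet, v ∈ e → c e ≠ a v)
    (hodd : ∀ v₁ v₂ v₃ : V, G.Adj v₁ v₂ → G.Adj v₂ v₃ → v₁ ≠ v₃ →
      a v₁ = a v₃ ∨ Odd ((a v₁ : ℤ) - (a v₃ : ℤ))) :
    IsAdditiveEdgeColoring G c := by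
  rintro e he f hf hef ⟨v, hve, hvf⟩ hsum
  obtain ⟨u, rfl⟩ := Sym2.mem_iff_exists.1 hve
  obtain ⟨w, rfl⟩ := Sym2.mem_iff_exists.1 hvf
  have huw : u ≠ w := fun h => hef (by rw [h])
  have hne : c s(v, u) ≠ c s(v, w) :=
    hc _ he _ hf hef ⟨v, Sym2.mem_mk_left _ _, Sym2.mem_mk_left _ _⟩
  rw [SimpleGraph.mem_edgeSet] at he hf
  have hvu := nbrSum_add_missing hreg hcol hc ha hmiss he
  have hvw := nbrSum_add_missing hreg hcol hc ha hmiss hf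
  rcases hodd u v w he.symm hf huw with heq | ⟨k, hk⟩ <;> omega

/-- Let `G` be `d`-regular with chromatic index `d+1` and let `c` be a
proper edge coloring with colors `{1, …, d+1}`.  If `a v` is the color missing at
each vertex `v`, and for every path `v₁, v₂, v₃` of length 2 the difference
`a v₁ − a v₃` is `0` or odd, then `c` is an additive edge coloring. -/
theorem additive_of_missing_odd (G : SimpleGraph V) (d : ℕ)
    (hreg : G.IsRegularOfDegree d) (hchrom : chromIndex G = d + 1)
    (c : Sym2 V → ℕ) (hcol : ∀ e ∈ G.edgeSet, c e ∈ Finset.Icc 1 (d + 1))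
    (hc : IsProperEdgeColoring G c)
    (a : V → ℕ) (ha : ∀ v, a v ∈ Finset.Icc 1 (d + 1))
    (hmiss : ∀ v, ∀ e ∈ G.edgeSet, v ∈ e → c e ≠ a v)
    (hodd : ∀ v₁ v₂ v₃ : V, G.Adj v₁ v₂ → G.Adj v₂ v₃ → v₁ ≠ v₃ →
      a v₁ = a v₃ ∨ Odd ((a v₁ : ℤ) - (a v₃ : ℤ))) :
    IsAdditiveEdgeColoring G c :=
  additive_of_missing_odd_general G d hreg c hcol hc a ha hmiss hodd

end AddEdge
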